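/- arXiv:1904.00177 — 4 statements merged into one kernel-verified Lean document; each statement's English description precedes it below -/
import Mathlib

section
/- Let A = Σ_i a_i P_i and B = Σ_i b_i P_i be two matrices diagonal in the same orthogonal projector decomposition Σ_i P_i = I, with complex coefficients a_i, b_i. Then for any unitary W, |Tr[A† W B W†]| ≤ max_π |Σ_i ā_{π(i)} b_i|, where the maximum is over permutations π. -/
open Matrix

/-!
Write `M i j = Tr[P i W P j Wᴴ]`. Each entry is the squared Hilbert–Schmidt norm of
`P i W P j`, hence real and nonnegative, and `Σ P i = 1`, unitarity of `W` and `Tr P i = 1` make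
the row and column sums equal to `1`. So `M` is doubly stochastic, and
`Tr[Aᴴ W B Wᴴ] = Σ i j, M i j * conj (a i) * b j`. By Birkhoff's theorem `M` is a convex
combination of permutation matrices, so this sum is a convex combination of the sums
`Σ i, conj (a (π i)) * b i`, whose norms are bounded by their maximum.
-/

open Finset Equiv ComplexOrder

section DoublyStochastic

variable {n E : Type*} [Fintype n] [DecidableEq n] [SeminormedAddCommGroup E] [NormedSpace ℝ E]

theorem Matrix.sum_sum_permMatrix_smul (σ : Perm n) (g : n → n → E) :
    ∑ i, ∑ j, σ.permMatrix ℝ i j • g i j = ∑ i, g i (σ i) := by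
  simp [PEquiv.toMatrix_apply, ite_smul]

theorem Matrix.norm_sum_sum_smul_le_of_mem_doublyStochastic {M : Matrix n n ℝ}
    (hM : M ∈ doublyStochastic ℝ n) (g : n → n → E) :
    ‖∑ i, ∑ j, M i j • g i j‖ ≤
      univ.sup' univ_nonempty fun σ : Perm n => ‖∑ j, g (σ j) j‖ := by
  obtain ⟨w, hw0, hw1, rfl⟩ := exists_eq_sum_perm_of_mem_doublyStochastic hM
  have hconv : ∑ i, ∑ j, (∑ σ, w σ • σ.permMatrix ℝ) i j • g i j =
      ∑ σ, w σ • ∑ i, g i (σ i) := by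
    simp only [Matrix.sum_apply, Matrix.smul_apply, smul_eq_mul, sum_smul, mul_smul, smul_sum,
      ← sum_sum_permMatrix_smul]
    simp_rw [sum_comm (γ := Perm n)]
  have hbound (σ : Perm n) : ‖∑ i, g i (σ i)‖ ≤
      univ.sup' univ_nonempty fun σ : Perm n => ‖∑ j, g (σ j) j‖ :=
    calc ‖∑ i, g i (σ i)‖ = ‖∑ j, g (σ⁻¹ j) j‖ := by
          rw [← Equiv.sum_comp σ fun j => g (σ⁻¹ j) j]
          simp only [Perm.coe_inv, symm_apply_apply]
      _ ≤ _ := le_sup' (fun τ : Perm n => ‖∑ j, g (τ j) j‖) (mem_univ σ⁻¹)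
  rw [hconv, ← mem_closedBall_zero_iff]
  exact (convex_closedBall _ _).sum_mem (fun σ _ => hw0 σ) hw1
    fun σ _ => mem_closedBall_zero_iff.2 (hbound σ)

end DoublyStochastic

section Overlap

variable {ι n : Type*} [Fintype n]

theorem Matrix.trace_mul_conj_nonneg {P Q : Matrix n n ℂ} (hP : P.IsHermitian)
    (hQ : Q.IsHermitian) (hP2 : IsIdempotentElem P) (hQ2 : IsIdempotentElem Q)
    (W : Matrix n n ℂ) :
    0 ≤ (P * (W * Q * Wᴴ)).trace := by
  have hX : (P * W * Q) * (P * W * Q)ᴴ = P * (W * Q * Wᴴ) * P := by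
    simp only [conjTranspose_mul, hP.eq, hQ.eq, mul_assoc]
    rw [← mul_assoc Q Q, hQ2.eq]
  have := (posSemidef_self_mul_conjTranspose (P * W * Q)).trace_nonneg
  rwa [hX, trace_mul_cycle, hP2.eq] at this

def overlapMatrix (P : ι → Matrix n n ℂ) (W : Matrix n n ℂ) : Matrix ι ι ℝ :=
  of fun i j => (P i * (W * P j * Wᴴ)).trace.re

variable {P : ι → Matrix n n ℂ} {W : Matrix n n ℂ}

theorem ofReal_overlapMatrix (hHerm : ∀ i, (P i).IsHermitian)
    (hIdem : ∀ i, IsIdempotentElem (P i)) (i j : ι) :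
    (overlapMatrix P W i j : ℂ) = (P i * (W * P j * Wᴴ)).trace :=
  (Complex.eq_re_of_ofReal_le <| Complex.ofReal_zero ▸
    trace_mul_conj_nonneg (hHerm i) (hHerm j) (hIdem i) (hIdem j) W).symm

theorem overlapMatrix_mem_doublyStochastic [Fintype ι] [DecidableEq ι] [DecidableEq n]
    (hHerm : ∀ i, (P i).IsHermitian) (hIdem : ∀ i, IsIdempotentElem (P i))
    (hSum : ∑ i, P i = 1) (hTrace : ∀ i, (P i).trace = 1)
    (hW : W * Wᴴ = 1) (hW' : Wᴴ * W = 1) :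
    overlapMatrix P W ∈ doublyStochastic ℝ ι := by
  refine mem_doublyStochastic_iff_sum.2 ⟨fun i j => ?_, fun i => ?_, fun j => ?_⟩
  · exact (Complex.nonneg_iff.1
      (trace_mul_conj_nonneg (hHerm i) (hHerm j) (hIdem i) (hIdem j) W)).1
  · simp only [overlapMatrix, of_apply, ← Complex.re_sum, ← trace_sum, ← mul_sum, ← sum_mul,
      hSum, mul_one, hW, hTrace, Complex.one_re]
  · simp only [overlapMatrix, of_apply, ← Complex.re_sum, ← trace_sum, ← sum_mul, hSum, one_mul]
    rw [trace_mul_cycle, hW', one_mul, hTrace, Complex.one_re]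

theorem trace_sum_smul_conjTranspose_mul_conj [Fintype ι] (hHerm : ∀ i, (P i).IsHermitian)
    (a b : ι → ℂ) :
    ((∑ i, a i • P i)ᴴ * (W * (∑ j, b j • P j) * Wᴴ)).trace =
      ∑ i, ∑ j, (P i * (W * P j * Wᴴ)).trace * (starRingEnd ℂ (a i) * b j) := by
  simp only [conjTranspose_sum, conjTranspose_smul, (hHerm _).eq, sum_mul, mul_sum, trace_sum,
    smul_mul_assoc, mul_smul_comm, trace_smul, smul_eq_mul, Complex.star_def]
  rw [sum_comm]
  exact sum_congr rfl fun i _ => sum_congr rfl fun j _ => by ring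

end Overlap

theorem stmt_7_general (N m : ℕ) (P : Fin m → Matrix (Fin N) (Fin N) ℂ)
    (a b : Fin m → ℂ) (A B W : Matrix (Fin N) (Fin N) ℂ)
    (hHerm : ∀ i, (P i)ᴴ = P i)
    (hIdem : ∀ i, P i * P i = P i)
    (hSum : ∑ i, P i = 1)
    (hRankOne : ∀ i, (P i).trace = 1)
    (hA : A = ∑ i, a i • P i) (hB : B = ∑ i, b i • P i)
    (hW : W * Wᴴ = 1) (hW' : Wᴴ * W = 1) :
    ‖(Aᴴ * (W * B * Wᴴ)).trace‖ ≤
      Finset.univ.sup' Finset.univ_nonempty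
        (fun π : Equiv.Perm (Fin m) =>
          ‖∑ i, (starRingEnd ℂ) (a (π i)) * b i‖) := by
  subst hA hB
  have hM := overlapMatrix_mem_doublyStochastic hHerm hIdem hSum hRankOne hW hW'
  have hexpand : ((∑ i, a i • P i)ᴴ * (W * (∑ j, b j • P j) * Wᴴ)).trace =
      ∑ i, ∑ j, overlapMatrix P W i j • (starRingEnd ℂ (a i) * b j) := by
    simp only [trace_sum_smul_conjTranspose_mul_conj hHerm, Complex.real_smul,
      ofReal_overlapMatrix hHerm hIdem]
  rw [hexpand]
  exact norm_sum_sum_smul_le_of_mem_doublyStochastic hM _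

/-- Let `A = Σ_i a_i P_i` and `B = Σ_i b_i P_i` be diagonal in the same (rank-one)
orthogonal projector decomposition `Σ_i P_i = 1`. Then for any unitary `W`,
`|Tr[Aᴴ W B Wᴴ]| ≤ max_π |Σ_i conj (a (π i)) * b i|`, the maximum over permutations. -/
theorem stmt_7 (N m : ℕ) (P : Fin m → Matrix (Fin N) (Fin N) ℂ)
    (a b : Fin m → ℂ) (A B W : Matrix (Fin N) (Fin N) ℂ)
    (hHerm : ∀ i, (P i)ᴴ = P i)
    (hIdem : ∀ i, P i * P i = P i)
    (hOrth : ∀ i j, i ≠ j → P i * P j = 0)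
    (hSum : ∑ i, P i = 1)
    (hRankOne : ∀ i, (P i).trace = 1)
    (hA : A = ∑ i, a i • P i) (hB : B = ∑ i, b i • P i)
    (hW : W * Wᴴ = 1) (hW' : Wᴴ * W = 1) :
    ‖(Aᴴ * (W * B * Wᴴ)).trace‖ ≤
      Finset.univ.sup' Finset.univ_nonempty
        (fun π : Equiv.Perm (Fin m) =>
          ‖∑ i, (starRingEnd ℂ) (a (π i)) * b i‖) :=
  stmt_7_general N m P a b A B W hHerm hIdem hSum hRankOne hA hB hW hW'
end

section
/- Entanglement fidelity upper bound: let T be the traceless block of the Pauli transfer matrix of a channel with eigenvalues λ_1,...,λ_N, let T^U be an orthogonal matrix with eigenvalues λ^{ideal}_1,...,λ^{ideal}_N, and define u = Tr[T†T]/N and ξ_max = max_π (1/N)|Σ_i λ̄_{π(i)} λ^{ideal}_i|. Then (1/(N+1))(1 + Tr[(T^U)†T]) ≤ (1/(N+1))(1 + N·√(u − Σ_j|λ_j|²/N) + N·ξ_max). -/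
open Matrix Polynomial Finset

namespace Stmt9Aux

noncomputable section

/-- embed an n×n matrix into the lower-right block of an (n+1)×(n+1) matrix,
with 1 at the top-left corner. -/
def lift {n : ℕ} (M : Matrix (Fin n) (Fin n) ℂ) : Matrix (Fin (n+1)) (Fin (n+1)) ℂ :=
  Matrix.of (Fin.cons (Fin.cons 1 (fun _ => 0)) (fun i => Fin.cons 0 (M i)))

@[simp] lemma lift_zz {n : ℕ} (M : Matrix (Fin n) (Fin n) ℂ) : lift M 0 0 = 1 := rfl
@[simp] lemma lift_zs {n : ℕ} (M : Matrix (Fin n) (Fin n) ℂ) (j : Fin n) :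
    lift M 0 j.succ = 0 := by simp [lift]
@[simp] lemma lift_sz {n : ℕ} (M : Matrix (Fin n) (Fin n) ℂ) (i : Fin n) :
    lift M i.succ 0 = 0 := by simp [lift]
@[simp] lemma lift_ss {n : ℕ} (M : Matrix (Fin n) (Fin n) ℂ) (i j : Fin n) :
    lift M i.succ j.succ = M i j := by simp [lift]

lemma lift_conjTranspose {n : ℕ} (M : Matrix (Fin n) (Fin n) ℂ) :
    (lift M)ᴴ = lift Mᴴ := by
  ext p q
  refine Fin.cases ?_ (fun i => ?_) p <;> [skip; skip] <;>
    · refine Fin.cases ?_ (fun j => ?_) q <;>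
        simp [conjTranspose_apply]

lemma lift_mul {n : ℕ} (M N : Matrix (Fin n) (Fin n) ℂ) :
    lift M * lift N = lift (M * N) := by
  ext p q
  refine Fin.cases ?_ (fun i => ?_) p <;>
    refine Fin.cases ?_ (fun j => ?_) q <;>
      simp [mul_apply, Fin.sum_univ_succ]

lemma lift_one {n : ℕ} : lift (1 : Matrix (Fin n) (Fin n) ℂ) = 1 := by
  ext p q
  refine Fin.cases ?_ (fun i => ?_) p <;>
    refine Fin.cases ?_ (fun j => ?_) q <;>
      simp [Matrix.one_apply, Fin.succ_ne_zero, (Fin.succ_ne_zero _).symm,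
        Fin.succ_inj]

end

end Stmt9Aux

namespace Stmt9Aux
open scoped ComplexOrder

lemma exists_eigen {n : ℕ} (A : Matrix (Fin (n+1)) (Fin (n+1)) ℂ) :
    ∃ (μ : ℂ) (v : Fin (n+1) → ℂ), v ≠ 0 ∧ A *ᵥ v = μ • v := by
  obtain ⟨μ, hμ⟩ := IsAlgClosed.exists_root A.charpoly (by
    rw [Matrix.charpoly_degree_eq_dim]
    simp only [Fintype.card_fin]
    exact_mod_cast (Nat.cast_add_one_ne_zero (R := WithBot ℕ) n))
  have heval : A.charpoly.eval μ = (Matrix.scalar _ μ - A).det := by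
    rw [Matrix.charpoly, eval_det, Matrix.matPolyEquiv_charmatrix]
    simp
  have hdet : (Matrix.scalar _ μ - A).det = 0 := by
    rw [← heval]; exact hμ
  obtain ⟨v, hv0, hv⟩ := (Matrix.exists_mulVec_eq_zero_iff).2 hdet
  refine ⟨μ, v, hv0, ?_⟩
  have := hv
  rw [Matrix.sub_mulVec, sub_eq_zero] at this
  rw [← this]
  ext i
  simp [Matrix.scalar, Matrix.mulVec_diagonal]

lemma sandwich_apply {n : ℕ} (X Y : Matrix (Fin n) (Fin n) ℂ) (i j : Fin n) :
    (Xᴴ * Y * X) i j = ∑ a, ∑ b, (starRingEnd ℂ) (X a i) * Y a b * X b j := by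
  simp only [Matrix.mul_apply, Matrix.conjTranspose_apply, Finset.sum_mul, starRingEnd_apply]
  rw [Finset.sum_comm]

theorem schur : ∀ (n : ℕ) (A : Matrix (Fin n) (Fin n) ℂ),
    ∃ U R : Matrix (Fin n) (Fin n) ℂ,
      Uᴴ * U = 1 ∧ A = U * R * Uᴴ ∧ ∀ i j : Fin n, (j : ℕ) < (i : ℕ) → R i j = 0 := by
  intro n
  induction n with
  | zero =>
    intro A
    refine ⟨1, A, ?_, ?_, fun i => i.elim0⟩ <;> · ext i; exact i.elim0
  | succ n IH =>
    intro A
    obtain ⟨μ, v, hv0, hv⟩ := exists_eigen A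
    -- build a unit eigenvector in EuclideanSpace
    let v' : EuclideanSpace ℂ (Fin (n+1)) := (WithLp.equiv 2 _).symm v
    have hv'0 : v' ≠ 0 := by
      simpa [v'] using hv0
    set c : ℂ := ((‖v'‖⁻¹ : ℝ) : ℂ) with hc
    let w : EuclideanSpace ℂ (Fin (n+1)) := (‖v'‖⁻¹ : ℝ) • v'
    have hw : ‖w‖ = 1 := by
      rw [norm_smul]
      simp [norm_inv, inv_mul_cancel₀ (norm_ne_zero_iff.2 hv'0)]
    have hortho : Orthonormal ℂ (({0} : Set (Fin (n+1))).restrict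
        (fun _ : Fin (n+1) => w)) := by
      refine ⟨fun i => hw, fun {i j} hij => absurd ?_ hij⟩
      exact Subtype.ext (i.2.trans j.2.symm)
    obtain ⟨b, hb0⟩ := Orthonormal.exists_orthonormalBasis_extension_of_card_eq
      (by simp) hortho
    have hb0' : b 0 = w := hb0 0 rfl
    set U : Matrix (Fin (n+1)) (Fin (n+1)) ℂ := Matrix.of (fun i j => b j i) with hUdef
    have hUU : Uᴴ * U = 1 := by
      ext j k
      rw [Matrix.mul_apply, Matrix.one_apply]
      have : ∑ i, (Uᴴ) j i * U i k = inner (𝕜 := ℂ) (b j) (b k) := by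
        rw [PiLp.inner_apply]
        refine Finset.sum_congr rfl fun i _ => ?_
        rw [RCLike.inner_apply]
        simp only [Matrix.conjTranspose_apply, hUdef, Matrix.of_apply, starRingEnd_apply]
        exact mul_comm _ _
      rw [this, orthonormal_iff_ite.mp b.orthonormal j k]
    have hUUc : U * Uᴴ = 1 := mul_eq_one_comm.mp hUU
    -- first column of U is the eigenvector
    have hcol : ∀ i, U i 0 = c * v i := by
      intro i
      simp only [hUdef, Matrix.of_apply, hb0']
      show ((‖v'‖⁻¹ : ℝ) • v') i = c * v i
      first
      | simp [hc, v', Complex.real_smul]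
      | rfl
    have heig : ∀ i, (A *ᵥ (fun k => U k 0)) i = μ * U i 0 := by
      intro i
      have h1 : (fun k => U k 0) = c • v := by
        funext k; simp [hcol, Pi.smul_apply, smul_eq_mul]
      rw [h1, Matrix.mulVec_smul, hv]
      simp only [hcol, Pi.smul_apply, smul_eq_mul]
      ring
    set C : Matrix (Fin (n+1)) (Fin (n+1)) ℂ := Uᴴ * A * U with hCdef
    have hCcol : ∀ j, C j 0 = μ * (1 : Matrix (Fin (n+1)) (Fin (n+1)) ℂ) j 0 := by
      intro j
      have : C j 0 = ∑ i, (starRingEnd ℂ) (U i j) * (μ * U i 0) := by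
        rw [hCdef, Matrix.mul_assoc, Matrix.mul_apply]
        congr 1
        ext i
        rw [Matrix.conjTranspose_apply]
        congr 1
        rw [← heig i, Matrix.mulVec, Matrix.mul_apply]
        rfl
      rw [this]
      have : ∑ i, (starRingEnd ℂ) (U i j) * (μ * U i 0)
          = μ * ∑ i, (Uᴴ) j i * U i 0 := by
        rw [Finset.mul_sum]
        refine Finset.sum_congr rfl fun i _ => ?_
        simp only [Matrix.conjTranspose_apply, starRingEnd_apply]
        ring
      rw [this, ← Matrix.mul_apply, hUU]
    set A' : Matrix (Fin n) (Fin n) ℂ := Matrix.of (fun i j => C i.succ j.succ) with hA'def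
    obtain ⟨U', R', hU', hA', hR'⟩ := IH A'
    have hU'c : U' * U'ᴴ = 1 := mul_eq_one_comm.mp hU'
    have hR'eq : U'ᴴ * A' * U' = R' := by
      rw [hA']
      calc U'ᴴ * (U' * R' * U'ᴴ) * U'
          = (U'ᴴ * U') * R' * (U'ᴴ * U') := by noncomm_ring
        _ = R' := by rw [hU']; simp
    set L : Matrix (Fin (n+1)) (Fin (n+1)) ℂ := lift U' with hLdef
    have hLL : Lᴴ * L = 1 := by
      rw [hLdef, lift_conjTranspose, lift_mul, hU', lift_one]
    have hLLc : L * Lᴴ = 1 := by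
      rw [hLdef, lift_conjTranspose, lift_mul, hU'c, lift_one]
    refine ⟨U * L, Lᴴ * C * L, ?_, ?_, ?_⟩
    · calc (U * L)ᴴ * (U * L) = Lᴴ * (Uᴴ * U) * L := by
            rw [Matrix.conjTranspose_mul]; noncomm_ring
        _ = 1 := by rw [hUU, Matrix.mul_one, hLL]
    · calc A = (U * Uᴴ) * A * (U * Uᴴ) := by rw [hUUc]; simp
        _ = U * C * Uᴴ := by rw [hCdef]; noncomm_ring
        _ = U * (L * Lᴴ) * C * (L * Lᴴ) * Uᴴ := by rw [hLLc]; simp [Matrix.mul_assoc]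
        _ = (U * L) * (Lᴴ * C * L) * (U * L)ᴴ := by
            rw [Matrix.conjTranspose_mul]; noncomm_ring
    · intro p q hpq
      obtain ⟨i, rfl⟩ := Fin.eq_succ_of_ne_zero (show p ≠ 0 by rintro rfl; simp at hpq)
      rcases Fin.eq_zero_or_eq_succ q with rfl | ⟨j, rfl⟩
      · -- q = 0
          rw [sandwich_apply]
          refine Finset.sum_eq_zero fun a _ => ?_
          rw [Fin.sum_univ_succ]
          have h0 : (∑ b : Fin n, (starRingEnd ℂ) (L a i.succ) * C a b.succ * L b.succ 0) = 0 := by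
            refine Finset.sum_eq_zero fun b _ => ?_
            simp [hLdef]
          rw [h0, add_zero, hCcol a]
          refine Fin.cases ?_ (fun a' => ?_) a
          · simp [hLdef]
          · simp [Matrix.one_apply, Fin.succ_ne_zero]
      · -- q = j.succ, p = i.succ
          have hji : (j : ℕ) < (i : ℕ) := by
            simpa [Fin.val_succ] using hpq
          rw [sandwich_apply, Fin.sum_univ_succ]
          have h0 : (∑ b, (starRingEnd ℂ) (L 0 i.succ) * C 0 b * L b j.succ) = 0 := by
            refine Finset.sum_eq_zero fun b _ => ?_
            simp [hLdef]
          rw [h0, zero_add]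
          have : ∀ a : Fin n, (∑ b, (starRingEnd ℂ) (L a.succ i.succ) * C a.succ b * L b j.succ)
              = ∑ b : Fin n, (starRingEnd ℂ) (U' a i) * A' a b * U' b j := by
            intro a
            rw [Fin.sum_univ_succ]
            simp [hLdef, hA'def]
          rw [Finset.sum_congr rfl (fun a _ => this a), ← sandwich_apply, hR'eq]
          exact hR' i j hji

end Stmt9Aux

/-- characteristic polynomial is invariant under unitary conjugation -/
lemma charpoly_unitary_conj {n : ℕ} (U R : Matrix (Fin n) (Fin n) ℂ)
    (hU : Uᴴ * U = 1) : (U * R * Uᴴ).charpoly = R.charpoly := by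
  have hUc : U * Uᴴ = 1 := mul_eq_one_comm.mp hU
  have key : (U * R * Uᴴ).charmatrix
      = ((C : ℂ →+* ℂ[X]).mapMatrix U) * R.charmatrix * ((C : ℂ →+* ℂ[X]).mapMatrix Uᴴ) := by
    rw [Matrix.charmatrix, Matrix.charmatrix]
    rw [Matrix.mul_sub, Matrix.sub_mul]
    congr 1
    · -- scalar X stays
      have h1 : (C : ℂ →+* ℂ[X]).mapMatrix U * Matrix.scalar (Fin n) (X : ℂ[X])
          = Matrix.scalar (Fin n) (X : ℂ[X]) * (C : ℂ →+* ℂ[X]).mapMatrix U := by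
        rw [Matrix.scalar_commute]
        intro r
        exact Commute.all _ _
      rw [h1, Matrix.mul_assoc]
      have h2 : (C : ℂ →+* ℂ[X]).mapMatrix U * (C : ℂ →+* ℂ[X]).mapMatrix Uᴴ = 1 := by
        rw [← _root_.map_mul ((C : ℂ →+* ℂ[X]).mapMatrix), hUc]; exact map_one _
      rw [h2, Matrix.mul_one]
    · rw [← _root_.map_mul ((C : ℂ →+* ℂ[X]).mapMatrix),
        ← _root_.map_mul ((C : ℂ →+* ℂ[X]).mapMatrix)]
  rw [Matrix.charpoly, key, Matrix.det_mul, Matrix.det_mul, Matrix.charpoly]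
  have : ((C : ℂ →+* ℂ[X]).mapMatrix U).det * ((C : ℂ →+* ℂ[X]).mapMatrix Uᴴ).det = 1 := by
    rw [mul_comm, ← Matrix.det_mul, ← _root_.map_mul ((C : ℂ →+* ℂ[X]).mapMatrix), hU,
      _root_.map_one ((C : ℂ →+* ℂ[X]).mapMatrix), Matrix.det_one]
  calc ((C : ℂ →+* ℂ[X]).mapMatrix U).det * R.charmatrix.det
        * ((C : ℂ →+* ℂ[X]).mapMatrix Uᴴ).det
      = (((C : ℂ →+* ℂ[X]).mapMatrix U).det * ((C : ℂ →+* ℂ[X]).mapMatrix Uᴴ).det)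
        * R.charmatrix.det := by ring
    _ = R.charmatrix.det := by rw [this, one_mul]

lemma charpoly_transpose {n : ℕ} (M : Matrix (Fin n) (Fin n) ℂ) :
    (Mᵀ).charpoly = M.charpoly := by
  have : (Mᵀ).charmatrix = (M.charmatrix)ᵀ := by
    funext i j
    by_cases h : i = j
    · subst h; simp
    · rw [Matrix.charmatrix_apply_ne _ _ _ h]
      rw [show M.charmatrixᵀ i j = M.charmatrix j i from rfl,
        Matrix.charmatrix_apply_ne _ _ _ (Ne.symm h), Matrix.transpose_apply]
  rw [Matrix.charpoly, this, Matrix.det_transpose, Matrix.charpoly]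

/-- charpoly roots of an upper triangular matrix are the diagonal entries -/
lemma roots_charpoly_triangular {n : ℕ} (R : Matrix (Fin n) (Fin n) ℂ)
    (h : ∀ i j : Fin n, (j : ℕ) < (i : ℕ) → R i j = 0) :
    R.charpoly.roots = Multiset.map (fun i => R i i) Finset.univ.val := by
  have ht : R.charmatrix.BlockTriangular id := by
    intro i j hij
    rw [Matrix.charmatrix_apply_ne _ _ _ (by exact fun e => absurd e (by
      intro e; subst e; exact lt_irrefl _ hij)), h i j hij]
    simp
  have : R.charpoly = ∏ i : Fin n, (X - C (R i i)) := by
    rw [Matrix.charpoly, Matrix.det_of_upperTriangular ht]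
    exact Finset.prod_congr rfl fun i _ => Matrix.charmatrix_apply_eq R i
  rw [this]
  have : (∏ i : Fin n, (X - C (R i i)))
      = (Multiset.map (fun a => X - C a) (Multiset.map (fun i => R i i) Finset.univ.val)).prod := by
    rw [Multiset.map_map]
    rfl
  rw [this, Polynomial.roots_multiset_prod_X_sub_C]

/-- an upper triangular unitary matrix is diagonal -/
lemma triangular_unitary_offdiag_zero {n : ℕ} (S : Matrix (Fin n) (Fin n) ℂ)
    (h1 : Sᴴ * S = 1) (ht : ∀ i j : Fin n, (j : ℕ) < (i : ℕ) → S i j = 0) :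
    ∀ i j : Fin n, i ≠ j → S i j = 0 := by
  have h2 : S * Sᴴ = 1 := mul_eq_one_comm.mp h1
  have colsum : ∀ i : Fin n, ∑ a, Complex.normSq (S a i) = 1 := by
    intro i
    have := congrFun (congrFun h1 i) i
    rw [Matrix.mul_apply, Matrix.one_apply_eq] at this
    have : (((∑ a, Complex.normSq (S a i) : ℝ)) : ℂ) = 1 := by
      rw [← this]
      push_cast
      refine Finset.sum_congr rfl fun a _ => ?_
      rw [Matrix.conjTranspose_apply, mul_comm, ← starRingEnd_apply, Complex.mul_conj]
    exact_mod_cast this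
  have rowsum : ∀ i : Fin n, ∑ b, Complex.normSq (S i b) = 1 := by
    intro i
    have := congrFun (congrFun h2 i) i
    rw [Matrix.mul_apply, Matrix.one_apply_eq] at this
    have : (((∑ b, Complex.normSq (S i b) : ℝ)) : ℂ) = 1 := by
      rw [← this]
      push_cast
      refine Finset.sum_congr rfl fun b _ => ?_
      rw [Matrix.conjTranspose_apply, ← starRingEnd_apply, Complex.mul_conj]
    exact_mod_cast this
  -- strong induction on the row index
  have main : ∀ m : ℕ, ∀ i : Fin n, (i : ℕ) = m → ∀ j, j ≠ i → S i j = 0 := by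
    intro m
    induction m using Nat.strong_induction_on with
    | _ m IHm =>
      intro i him j hji
      -- first: the diagonal entry has norm 1
      have hdiag : Complex.normSq (S i i) = 1 := by
        have h0 : ∀ a : Fin n, a ≠ i → Complex.normSq (S a i) = 0 := by
          intro a hai
          rcases lt_or_gt_of_ne (fun e : (a : ℕ) = (i : ℕ) => hai (Fin.ext e)) with hl | hg
          · -- a < i : use induction hypothesis on row a
            rw [IHm (a : ℕ) (by omega) a rfl i (by exact fun e => hai (e.symm ▸ rfl))]
            simp
          · -- a > i : triangularity
            rw [ht a i hg]; simp
        have := colsum i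
        rwa [Finset.sum_eq_single i (fun a _ hai => h0 a hai) (by intro h; exact absurd (Finset.mem_univ i) h)] at this
      -- now the row sum forces the off-diagonal entries to vanish
      have hsum := rowsum i
      rw [← Finset.add_sum_erase _ _ (Finset.mem_univ i), hdiag] at hsum
      have hz : ∑ b ∈ Finset.univ.erase i, Complex.normSq (S i b) = 0 := by linarith
      have : Complex.normSq (S i j) = 0 := by
        have hmem : j ∈ Finset.univ.erase i := Finset.mem_erase.mpr ⟨hji, Finset.mem_univ j⟩
        have hnn : ∀ b ∈ Finset.univ.erase i, 0 ≤ Complex.normSq (S i b) :=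
          fun b _ => Complex.normSq_nonneg _
        exact (Finset.sum_eq_zero_iff_of_nonneg hnn).mp hz j hmem
      exact Complex.normSq_eq_zero.mp this
  intro i j hij
  exact main (i : ℕ) i rfl j (Ne.symm hij)

namespace Stmt9Aux

lemma exists_comp_perm {α : Type*} [DecidableEq α] {N : ℕ} (f g : Fin N → α)
    (h : Multiset.map f Finset.univ.val = Multiset.map g Finset.univ.val) :
    ∃ σ : Equiv.Perm (Fin N), f = g ∘ σ := by
  have hcard : ∀ a : α, Fintype.card {x // f x = a} = Fintype.card {x // g x = a} := by
    intro a
    have := congrArg (Multiset.count a) h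
    rw [Multiset.count_map, Multiset.count_map] at this
    simp only [Fintype.card_subtype]
    simpa [Finset.filter_val, Finset.card, eq_comm] using this
  have e : ∀ a : α, {x // f x = a} ≃ {x // g x = a} := fun a =>
    Fintype.equivOfCardEq (hcard a)
  let σ : Fin N ≃ Fin N :=
    (Equiv.sigmaFiberEquiv f).symm.trans
      ((Equiv.sigmaCongrRight e).trans (Equiv.sigmaFiberEquiv g))
  refine ⟨σ, funext fun x => ?_⟩
  have : σ x = (e (f x) ⟨x, rfl⟩ : {y // g y = f x}).val := by
    simp [σ, Equiv.sigmaFiberEquiv]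
  simp only [Function.comp_apply, this]
  exact ((e (f x)) ⟨x, rfl⟩).2.symm

/-- roots of a real polynomial over ℂ are closed under conjugation -/
lemma roots_conj_closed (p : Polynomial ℝ) :
    Multiset.map (starRingEnd ℂ) (p.map Complex.ofRealHom).roots
      = (p.map Complex.ofRealHom).roots := by
  set q := p.map Complex.ofRealHom with hq
  have hsplit : Splits q := IsAlgClosed.splits _
  have h1 : (q.map (starRingEnd ℂ : ℂ →+* ℂ)).roots
      = Multiset.map (starRingEnd ℂ) q.roots := hsplit.roots_map _
  have h2 : q.map (starRingEnd ℂ : ℂ →+* ℂ) = q := by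
    rw [hq, Polynomial.map_map]
    congr 1
    ext r
    simp [Complex.conj_ofReal]
  rw [← h1, h2]

lemma map_conjTranspose {N : ℕ} (M : Matrix (Fin N) (Fin N) ℝ) :
    (M.map (Complex.ofReal : ℝ → ℂ))ᴴ = Mᵀ.map (Complex.ofReal : ℝ → ℂ) := by
  ext i j
  simp [Matrix.conjTranspose_apply, Matrix.map_apply, Complex.conj_ofReal]

lemma trace_map_ofReal {N : ℕ} (M : Matrix (Fin N) (Fin N) ℝ) :
    (M.map (Complex.ofReal : ℝ → ℂ)).trace = ((M.trace : ℝ) : ℂ) := by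
  simp [Matrix.trace, Matrix.map_apply, Matrix.diag]

end Stmt9Aux


namespace Stmt9Aux

set_option maxHeartbeats 1000000 in
theorem key_bound (N : ℕ) (hN : 0 < N) (T TU : Matrix (Fin N) (Fin N) ℝ)
    (hTU : TUᵀ * TU = 1)
    (lam lamIdeal : Fin N → ℂ)
    (hlam : (T.map Complex.ofReal).charpoly.roots = Multiset.map lam Finset.univ.val)
    (hlamIdeal : (TU.map Complex.ofReal).charpoly.roots =
      Multiset.map lamIdeal Finset.univ.val)
    (u ximax : ℝ)
    (hu : u = (Tᵀ * T).trace / N)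
    (hxi : ximax = Finset.univ.sup' Finset.univ_nonempty
      (fun π : Equiv.Perm (Fin N) =>
        (1 / N) * ‖∑ i, (starRingEnd ℂ) (lam (π i)) * lamIdeal i‖)) :
    (TUᵀ * T).trace ≤ N * Real.sqrt (u - (∑ j, ‖lam j‖ ^ 2) / N) + N * ximax := by
  have hNR : (0:ℝ) < N := by exact_mod_cast hN
  set A : Matrix (Fin N) (Fin N) ℂ := T.map Complex.ofReal with hAdef
  set B : Matrix (Fin N) (Fin N) ℂ := TU.map Complex.ofReal with hBdef
  -- complex orthogonality of B
  have hmapmul : ∀ (X Y : Matrix (Fin N) (Fin N) ℝ),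
      (X * Y).map (Complex.ofReal : ℝ → ℂ) = X.map Complex.ofReal * Y.map Complex.ofReal := by
    intro X Y
    ext i j
    simp only [Matrix.map_apply, Matrix.mul_apply]
    push_cast
    rfl
  have hBU : Bᴴ * B = 1 := by
    rw [hBdef, map_conjTranspose, ← hmapmul, hTU]
    exact Matrix.map_one _ (by simp) (by simp)
  have hBBc : B * Bᴴ = 1 := mul_eq_one_comm.mp hBU
  -- Schur decomposition of A
  obtain ⟨U, R, hUU, hA, hRt⟩ := schur N A
  have hUUc : U * Uᴴ = 1 := mul_eq_one_comm.mp hUU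
  set d : Fin N → ℂ := fun i => R i i with hddef
  have hAchar : A.charpoly = R.charpoly := by
    rw [hA]; exact charpoly_unitary_conj U R hUU
  have hd_roots : Multiset.map d Finset.univ.val = Multiset.map lam Finset.univ.val := by
    rw [← roots_charpoly_triangular R hRt, ← hAchar, hAdef, hlam]
  obtain ⟨σ₀, hσ₀⟩ := exists_comp_perm d lam hd_roots
  -- conjugation-closure permutation for lam
  have hconj_roots : Multiset.map ((starRingEnd ℂ) ∘ lam) Finset.univ.val
      = Multiset.map lam Finset.univ.val := by
    have h1 : Multiset.map ((starRingEnd ℂ) ∘ lam) Finset.univ.val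
        = Multiset.map (starRingEnd ℂ) (Multiset.map lam Finset.univ.val) := by
      rw [Multiset.map_map]
    have h2 : (T.map Complex.ofReal).charpoly = T.charpoly.map Complex.ofRealHom := by
      exact Matrix.charpoly_map T Complex.ofRealHom
    rw [h1, ← hlam, h2, roots_conj_closed, ← h2, hlam]
  obtain ⟨ρ₂, hρ₂⟩ := exists_comp_perm ((starRingEnd ℂ) ∘ lam) lam hconj_roots
  have hlamconj : ∀ x, lam x = (starRingEnd ℂ) (lam (ρ₂ x)) := by
    intro x
    have := congrFun hρ₂ x
    simp only [Function.comp_apply] at this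
    rw [← this, Complex.conj_conj]
  -- Schur decomposition of Bᴴ, which is diagonal
  obtain ⟨V, S, hVV, hBd, hSt⟩ := schur N Bᴴ
  have hVVc : V * Vᴴ = 1 := mul_eq_one_comm.mp hVV
  have hSeq : S = Vᴴ * Bᴴ * V := by
    rw [hBd]
    symm
    calc Vᴴ * (V * S * Vᴴ) * V = (Vᴴ * V) * S * (Vᴴ * V) := by noncomm_ring
      _ = S := by rw [hVV]; simp
  have hSu : Sᴴ * S = 1 := by
    rw [hSeq]
    have hSH : (Vᴴ * Bᴴ * V)ᴴ = Vᴴ * B * V := by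
      simp [Matrix.conjTranspose_mul, Matrix.mul_assoc]
    rw [hSH]
    calc (Vᴴ * B * V) * (Vᴴ * Bᴴ * V) = Vᴴ * (B * (V * Vᴴ) * Bᴴ) * V := by noncomm_ring
      _ = Vᴴ * (B * Bᴴ) * V := by rw [hVVc]; simp [Matrix.mul_assoc]
      _ = 1 := by rw [hBBc]; simpa using hVV
  have hSdiag := triangular_unitary_offdiag_zero S hSu hSt
  set μf : Fin N → ℂ := fun i => S i i with hμdef
  have hS : S = Matrix.diagonal μf := by
    ext i j
    by_cases h : i = j
    · subst h; simp [Matrix.diagonal_apply_eq, hμdef]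
    · rw [Matrix.diagonal_apply_ne _ h]; exact hSdiag i j h
  -- eigenvalues of Bᴴ are lamIdeal up to permutation
  have hBchar : (Bᴴ).charpoly = (TU.map Complex.ofReal).charpoly := by
    have h1 : Bᴴ = (TU.map Complex.ofReal)ᵀ.map (starRingEnd ℂ) := rfl
    have h2 : Bᴴ = (TU.map Complex.ofReal)ᵀ := by
      rw [hBdef, map_conjTranspose]
      ext i j
      simp [Matrix.transpose_apply, Matrix.map_apply]
    rw [h2, _root_.charpoly_transpose]
  have hμ_roots : Multiset.map μf Finset.univ.val
      = Multiset.map lamIdeal Finset.univ.val := by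
    have h1 : (Bᴴ).charpoly = S.charpoly := by
      rw [hBd]; exact charpoly_unitary_conj V S hVV
    rw [← roots_charpoly_triangular S hSt, ← h1, hBchar, hlamIdeal]
  obtain ⟨τ, hτ⟩ := exists_comp_perm μf lamIdeal hμ_roots
  -- the unitary M and Q
  set M : Matrix (Fin N) (Fin N) ℂ := Uᴴ * Bᴴ * U with hMdef
  set Q : Matrix (Fin N) (Fin N) ℂ := Uᴴ * V with hQdef
  have hM : M = Q * S * Qᴴ := by
    rw [hMdef, hQdef, hBd, Matrix.conjTranspose_mul, Matrix.conjTranspose_conjTranspose]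
    noncomm_ring
  have hQu : Qᴴ * Q = 1 := by
    rw [hQdef, Matrix.conjTranspose_mul, Matrix.conjTranspose_conjTranspose]
    calc Vᴴ * U * (Uᴴ * V) = Vᴴ * (U * Uᴴ) * V := by noncomm_ring
      _ = 1 := by rw [hUUc]; simpa using hVV
  have hQuc : Q * Qᴴ = 1 := mul_eq_one_comm.mp hQu
  have hMH : Mᴴ = Uᴴ * B * U := by
    rw [hMdef]; simp [Matrix.conjTranspose_mul, Matrix.mul_assoc]
  have hMMc : M * Mᴴ = 1 := by
    rw [hMdef, hMH]
    calc (Uᴴ * Bᴴ * U) * (Uᴴ * B * U) = Uᴴ * (Bᴴ * (U * Uᴴ) * B) * U := by noncomm_ring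
      _ = Uᴴ * (Bᴴ * B) * U := by rw [hUUc]; simp [Matrix.mul_assoc]
      _ = 1 := by rw [hBU]; simpa using hUU
  -- diagonal entries of M via the doubly stochastic weights
  set w : Fin N → Fin N → ℝ := fun i a => Complex.normSq (Q i a) with hwdef
  have hMdiag : ∀ i, M i i = ∑ a, ((w i a : ℝ) : ℂ) * μf a := by
    intro i
    rw [hM, hS, Matrix.mul_apply]
    refine Finset.sum_congr rfl fun a _ => ?_
    rw [Matrix.mul_diagonal, Matrix.conjTranspose_apply, hwdef]
    simp only [← starRingEnd_apply]
    rw [show Q i a * μf a * (starRingEnd ℂ) (Q i a)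
        = Q i a * (starRingEnd ℂ) (Q i a) * μf a by ring, Complex.mul_conj]

  -- trace identities
  have htrace0 : (((TUᵀ * T).trace : ℝ) : ℂ) = (Bᴴ * A).trace := by
    have h : Bᴴ * A = (TUᵀ * T).map Complex.ofReal := by
      rw [hmapmul, hBdef, hAdef, map_conjTranspose]
    rw [h, trace_map_ofReal]
  have htrMR : (Bᴴ * A).trace = (M * R).trace := by
    rw [hA]
    calc (Bᴴ * (U * R * Uᴴ)).trace = ((Bᴴ * U * R) * Uᴴ).trace :=
          congrArg Matrix.trace (by noncomm_ring)
      _ = (Uᴴ * (Bᴴ * U * R)).trace := Matrix.trace_mul_comm _ _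
      _ = (M * R).trace := congrArg Matrix.trace (by rw [hMdef]; noncomm_ring)
  set E : Matrix (Fin N) (Fin N) ℂ := R - Matrix.diagonal d with hEdef
  have hRsplit : R = Matrix.diagonal d + E := by rw [hEdef]; noncomm_ring
  have hEzero : ∀ i k : Fin N, ¬((i:ℕ) < (k:ℕ)) → E i k = 0 := by
    intro i k h
    rcases eq_or_ne i k with rfl | hne
    · simp [hEdef, Matrix.sub_apply, Matrix.diagonal_apply_eq, hddef]
    · have hki : (k:ℕ) < (i:ℕ) := by
        rcases lt_trichotomy (i:ℕ) (k:ℕ) with h1|h1|h1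
        exacts [absurd h1 h, absurd (Fin.ext h1) hne, h1]
      simp [hEdef, Matrix.sub_apply, hRt i k hki, Matrix.diagonal_apply_ne _ hne]
  have htr_split : (M * R).trace
      = (M * Matrix.diagonal d).trace + (M * E).trace := by
    conv_lhs => rw [hRsplit]
    rw [Matrix.mul_add, Matrix.trace_add]
  -- Frobenius norms
  set nsd : ℝ := ∑ i, Complex.normSq (d i) with hnsd
  set nsE : ℝ := ∑ i, ∑ k, Complex.normSq (E i k) with hnsEdef
  have hnsE_nonneg : 0 ≤ nsE :=
    Finset.sum_nonneg fun i _ => Finset.sum_nonneg fun k _ => Complex.normSq_nonneg _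
  have hfrobA : (((Tᵀ * T).trace : ℝ) : ℂ) = (Aᴴ * A).trace := by
    have h : Aᴴ * A = (Tᵀ * T).map Complex.ofReal := by
      rw [hmapmul, hAdef, map_conjTranspose]
    rw [h, trace_map_ofReal]
  have htraceRR : (Aᴴ * A).trace = (Rᴴ * R).trace := by
    rw [hA]
    have h1 : (U * R * Uᴴ)ᴴ * (U * R * Uᴴ) = U * (Rᴴ * (Uᴴ * U) * R) * Uᴴ := by
      rw [Matrix.conjTranspose_mul, Matrix.conjTranspose_mul,
        Matrix.conjTranspose_conjTranspose]
      noncomm_ring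
    rw [h1, hUU, Matrix.mul_one]
    calc (U * (Rᴴ * R) * Uᴴ).trace = ((U * (Rᴴ * R)) * Uᴴ).trace := by
          rw [Matrix.mul_assoc]
      _ = (Uᴴ * (U * (Rᴴ * R))).trace := Matrix.trace_mul_comm _ _
      _ = ((Uᴴ * U) * (Rᴴ * R)).trace := by rw [Matrix.mul_assoc]
      _ = (Rᴴ * R).trace := by rw [hUU, Matrix.one_mul]
  have htraceRR' : (Rᴴ * R).trace = (((∑ k, ∑ i, Complex.normSq (R i k) : ℝ)) : ℂ) := by
    rw [Matrix.trace]
    push_cast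
    refine Finset.sum_congr rfl fun k _ => ?_
    rw [Matrix.diag_apply, Matrix.mul_apply]
    push_cast
    refine Finset.sum_congr rfl fun i _ => ?_
    rw [Matrix.conjTranspose_apply, mul_comm, ← starRingEnd_apply, Complex.mul_conj]
  have hsum_split : (∑ k, ∑ i, Complex.normSq (R i k)) = nsd + nsE := by
    have hpt : ∀ k i : Fin N, Complex.normSq (R i k)
        = Complex.normSq ((Matrix.diagonal d) i k) + Complex.normSq (E i k) := by
      intro k i
      rcases eq_or_ne i k with rfl | hne
      · rw [hEzero i i (lt_irrefl _), Matrix.diagonal_apply_eq]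
        simp [hddef]
      · rw [Matrix.diagonal_apply_ne _ hne]
        have : E i k = R i k := by simp [hEdef, Matrix.diagonal_apply_ne _ hne]
        rw [this]
        simp
    have h1 : (∑ k, ∑ i, Complex.normSq (R i k))
        = (∑ k, ∑ i, Complex.normSq ((Matrix.diagonal d) i k))
          + ∑ k, ∑ i, Complex.normSq (E i k) := by
      rw [← Finset.sum_add_distrib]
      refine Finset.sum_congr rfl fun k _ => ?_
      rw [← Finset.sum_add_distrib]
      exact Finset.sum_congr rfl fun i _ => hpt k i
    rw [h1]
    congr 1
    · rw [hnsd]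
      refine Finset.sum_congr rfl fun k _ => ?_
      rw [Finset.sum_eq_single k]
      · rw [Matrix.diagonal_apply_eq]
      · intro i _ hik
        rw [Matrix.diagonal_apply_ne _ hik]
        simp
      · intro h; exact absurd (Finset.mem_univ k) h
    · rw [hnsEdef, Finset.sum_comm]
  have hTtrace : (Tᵀ * T).trace = N * u := by
    rw [hu]; field_simp
  have hNu : (N : ℝ) * u = nsd + nsE := by
    have : (((Tᵀ * T).trace : ℝ) : ℂ) = ((nsd + nsE : ℝ) : ℂ) := by
      rw [hfrobA, htraceRR, htraceRR', hsum_split]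
    have := Complex.ofReal_inj.mp this
    rw [← this, hTtrace]
  set s : ℝ := ∑ j, ‖lam j‖ ^ 2 with hsdef
  have hkey2 : nsd = s := by
    rw [hnsd, hsdef]
    have h1 : ∀ i, Complex.normSq (d i) = ‖lam (σ₀ i)‖ ^ 2 := by
      intro i
      rw [congrFun hσ₀ i]
      simp [Complex.sq_norm]
    rw [Finset.sum_congr rfl fun i _ => h1 i]
    exact Equiv.sum_comp σ₀ (fun j => ‖lam j‖ ^ 2)
  have hnsE_eq : nsE = N * u - s := by rw [← hkey2]; linarith

  -- bound on the strictly-upper part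
  have htrME : (M * E).trace = ∑ i, ∑ k, M i k * E k i := by
    rw [Matrix.trace]
    refine Finset.sum_congr rfl fun i _ => ?_
    rw [Matrix.diag_apply, Matrix.mul_apply]
  have hMfrob : (∑ i, ∑ k, Complex.normSq (M i k)) = N := by
    have h1 : (M * Mᴴ).trace = N := by
      rw [hMMc, Matrix.trace_one]
      simp
    have h2 : (M * Mᴴ).trace = (((∑ i, ∑ k, Complex.normSq (M i k) : ℝ)) : ℂ) := by
      rw [Matrix.trace]
      push_cast
      refine Finset.sum_congr rfl fun i _ => ?_
      rw [Matrix.diag_apply, Matrix.mul_apply]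
      push_cast
      refine Finset.sum_congr rfl fun k _ => ?_
      rw [Matrix.conjTranspose_apply, ← starRingEnd_apply, Complex.mul_conj]
    rw [h2] at h1
    exact_mod_cast h1
  have habsME : ‖(M * E).trace‖ ≤ Real.sqrt ((N:ℝ) * nsE) := by
    rw [htrME]
    set x : ℝ := ∑ p : Fin N × Fin N, ‖M p.1 p.2‖ * ‖E p.2 p.1‖ with hx
    have hx_nonneg : 0 ≤ x :=
      Finset.sum_nonneg fun p _ =>
        mul_nonneg (norm_nonneg _) (norm_nonneg _)
    have h1 : ‖∑ i, ∑ k, M i k * E k i‖ ≤ x := by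
      calc ‖∑ i, ∑ k, M i k * E k i‖
          ≤ ∑ i, ‖∑ k, M i k * E k i‖ := norm_sum_le _ _
        _ ≤ ∑ i, ∑ k, ‖M i k‖ * ‖E k i‖ := by
            refine Finset.sum_le_sum fun i _ => ?_
            calc ‖∑ k, M i k * E k i‖
                ≤ ∑ k, ‖M i k * E k i‖ := norm_sum_le _ _
              _ = ∑ k, ‖M i k‖ * ‖E k i‖ := by
                  refine Finset.sum_congr rfl fun k _ => ?_
                  exact norm_mul _ _
        _ = x := by rw [hx, Fintype.sum_prod_type]
    have h2 : x ^ 2 ≤ (N:ℝ) * nsE := by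
      have hcs := Finset.sum_mul_sq_le_sq_mul_sq Finset.univ
        (fun p : Fin N × Fin N => ‖M p.1 p.2‖)
        (fun p : Fin N × Fin N => ‖E p.2 p.1‖)
      have hM2 : (∑ p : Fin N × Fin N, ‖M p.1 p.2‖ ^ 2) = (N:ℝ) := by
        rw [Fintype.sum_prod_type]
        rw [← hMfrob]
        exact Finset.sum_congr rfl fun i _ => Finset.sum_congr rfl fun k _ =>
          Complex.sq_norm _
      have hE2 : (∑ p : Fin N × Fin N, ‖E p.2 p.1‖ ^ 2) = nsE := by
        rw [Fintype.sum_prod_type, hnsEdef, Finset.sum_comm]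
        exact Finset.sum_congr rfl fun k _ => Finset.sum_congr rfl fun i _ =>
          Complex.sq_norm _
      calc x ^ 2 ≤ (∑ p : Fin N × Fin N, ‖M p.1 p.2‖ ^ 2)
            * (∑ p : Fin N × Fin N, ‖E p.2 p.1‖ ^ 2) := hcs
        _ = (N:ℝ) * nsE := by rw [hM2, hE2]
    calc ‖∑ i, ∑ k, M i k * E k i‖ ≤ x := h1
      _ = Real.sqrt (x ^ 2) := (Real.sqrt_sq hx_nonneg).symm
      _ ≤ Real.sqrt ((N:ℝ) * nsE) := Real.sqrt_le_sqrt h2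
  have hsqrt_eq : Real.sqrt ((N:ℝ) * nsE) = N * Real.sqrt (u - s / N) := by
    have h1 : (N:ℝ) * nsE = (N:ℝ)^2 * (u - s / N) := by
      rw [hnsE_eq]
      field_simp
    rw [h1, Real.sqrt_mul (sq_nonneg _), Real.sqrt_sq hNR.le]
  -- doubly stochastic weights and Birkhoff
  have hwds : (Matrix.of w) ∈ doublyStochastic ℝ (Fin N) := by
    rw [mem_doublyStochastic_iff_sum]
    refine ⟨fun i a => Complex.normSq_nonneg _, fun i => ?_, fun a => ?_⟩
    · have := congrFun (congrFun hQuc i) i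
      rw [Matrix.mul_apply, Matrix.one_apply_eq] at this
      have h2 : (((∑ a, Complex.normSq (Q i a) : ℝ)) : ℂ) = 1 := by
        rw [← this]
        push_cast
        refine Finset.sum_congr rfl fun a _ => ?_
        rw [Matrix.conjTranspose_apply, ← starRingEnd_apply, Complex.mul_conj]
      exact_mod_cast h2
    · have := congrFun (congrFun hQu a) a
      rw [Matrix.mul_apply, Matrix.one_apply_eq] at this
      have h2 : (((∑ i, Complex.normSq (Q i a) : ℝ)) : ℂ) = 1 := by
        rw [← this]
        push_cast
        refine Finset.sum_congr rfl fun i _ => ?_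
        rw [Matrix.conjTranspose_apply, mul_comm, ← starRingEnd_apply, Complex.mul_conj]
      exact_mod_cast h2
  obtain ⟨cw, hcw0, hcw1, hcwsum⟩ := exists_eq_sum_perm_of_mem_doublyStochastic hwds
  have hwentry : ∀ i a, w i a
      = ∑ π : Equiv.Perm (Fin N), cw π * (if π i = a then 1 else 0) := by
    intro i a
    have h' : w i a = (∑ π : Equiv.Perm (Fin N), cw π • Equiv.Perm.permMatrix ℝ π) i a :=
      (congrFun (congrFun hcwsum i) a).symm
    rw [h', Matrix.sum_apply]
    refine Finset.sum_congr rfl fun π _ => ?_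
    rw [Matrix.smul_apply, Equiv.Perm.permMatrix, PEquiv.toMatrix_apply,
      Equiv.toPEquiv_apply]
    simp [smul_eq_mul, eq_comm]

  -- the diagonal-part trace as a convex combination over permutations
  have htrMD : (M * Matrix.diagonal d).trace
      = ∑ π : Equiv.Perm (Fin N), ((cw π : ℝ) : ℂ) * (∑ i, d i * μf (π i)) := by
    have h1 : (M * Matrix.diagonal d).trace = ∑ i, M i i * d i := by
      rw [Matrix.trace]
      refine Finset.sum_congr rfl fun i _ => ?_
      rw [Matrix.diag_apply, Matrix.mul_diagonal]
    rw [h1]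
    have h2 : ∀ i, M i i * d i
        = ∑ a, ∑ π : Equiv.Perm (Fin N),
            ((cw π : ℝ) : ℂ) * (if π i = a then d i * μf a else 0) := by
      intro i
      rw [hMdiag i, Finset.sum_mul]
      refine Finset.sum_congr rfl fun a _ => ?_
      rw [hwentry i a]
      push_cast
      simp only [Finset.sum_mul]
      refine Finset.sum_congr rfl fun π _ => ?_
      by_cases h : π i = a <;> simp [h] <;> ring
    rw [Finset.sum_congr rfl fun i _ => h2 i]
    have h3 : ∀ i, (∑ a, ∑ π : Equiv.Perm (Fin N),
        ((cw π : ℝ) : ℂ) * (if π i = a then d i * μf a else 0))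
        = ∑ π : Equiv.Perm (Fin N), ((cw π : ℝ) : ℂ) * (d i * μf (π i)) := by
      intro i
      rw [Finset.sum_comm]
      refine Finset.sum_congr rfl fun π _ => ?_
      simp only [mul_ite, mul_zero]
      rw [Finset.sum_ite_eq]
      simp
    rw [Finset.sum_congr rfl fun i _ => h3 i, Finset.sum_comm]
    refine Finset.sum_congr rfl fun π _ => ?_
    rw [Finset.mul_sum]
  -- each permutation sum is bounded by N * ximax
  have habs_t : ∀ π : Equiv.Perm (Fin N),
      ‖∑ i, d i * μf (π i)‖ ≤ N * ximax := by
    intro π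
    set φ : Equiv.Perm (Fin N) := π.trans τ with hφ
    set ψ : Equiv.Perm (Fin N) := φ.symm.trans (σ₀.trans ρ₂) with hψ
    have hre : (∑ i, d i * μf (π i))
        = ∑ j, (starRingEnd ℂ) (lam (ψ j)) * lamIdeal j := by
      have h1 : ∀ i, d i * μf (π i)
          = (fun j => (starRingEnd ℂ) (lam (ψ j)) * lamIdeal j) (φ i) := by
        intro i
        show d i * μf (π i) = (starRingEnd ℂ) (lam (ψ (φ i))) * lamIdeal (φ i)
        have hψφ : ψ (φ i) = ρ₂ (σ₀ i) := by
          simp [hψ, Equiv.trans_apply, Equiv.symm_apply_apply]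
        have hφi : φ i = τ (π i) := rfl
        rw [hψφ, hφi, congrFun hσ₀ i, congrFun hτ (π i)]
        simp only [Function.comp_apply]
        rw [← hlamconj (σ₀ i)]
      rw [Finset.sum_congr rfl fun i _ => h1 i]
      simpa using Equiv.sum_comp φ (fun j => (starRingEnd ℂ) (lam (ψ j)) * lamIdeal j)
    rw [hre]
    have hle : (1 / (N:ℝ)) * ‖∑ j, (starRingEnd ℂ) (lam (ψ j)) * lamIdeal j‖
        ≤ ximax := by
      rw [hxi]
      exact Finset.le_sup'
        (f := fun π : Equiv.Perm (Fin N) =>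
          1 / (N:ℝ) * ‖∑ i, (starRingEnd ℂ) (lam (π i)) * lamIdeal i‖)
        (Finset.mem_univ ψ)
    have := mul_le_mul_of_nonneg_left hle hNR.le
    calc ‖∑ j, (starRingEnd ℂ) (lam (ψ j)) * lamIdeal j‖
        = (N:ℝ) * ((1 / (N:ℝ)) * ‖∑ j, (starRingEnd ℂ) (lam (ψ j)) * lamIdeal j‖) := by
          field_simp
      _ ≤ (N:ℝ) * ximax := this
  -- real part bound for the diagonal part
  have hreMD : ((M * Matrix.diagonal d).trace).re ≤ N * ximax := by
    rw [htrMD]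
    rw [Complex.re_sum]
    have hterm : ∀ π : Equiv.Perm (Fin N),
        (((cw π : ℝ) : ℂ) * (∑ i, d i * μf (π i))).re ≤ cw π * (N * ximax) := by
      intro π
      have h1 : (((cw π : ℝ) : ℂ) * (∑ i, d i * μf (π i))).re
          = cw π * (∑ i, d i * μf (π i)).re := by
        simp [Complex.mul_re]
      rw [h1]
      refine mul_le_mul_of_nonneg_left ?_ (hcw0 π)
      exact le_trans (Complex.re_le_norm _) (habs_t π)
    calc (∑ π : Equiv.Perm (Fin N), (((cw π : ℝ) : ℂ) * (∑ i, d i * μf (π i))).re)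
        ≤ ∑ π : Equiv.Perm (Fin N), cw π * (N * ximax) :=
          Finset.sum_le_sum fun π _ => hterm π
      _ = (∑ π : Equiv.Perm (Fin N), cw π) * (N * ximax) := by rw [Finset.sum_mul]
      _ = N * ximax := by rw [hcw1, one_mul]
  -- assemble everything
  have hfinal : (TUᵀ * T).trace = ((M * Matrix.diagonal d).trace).re
      + ((M * E).trace).re := by
    have h1 : (TUᵀ * T).trace = ((M * R).trace).re := by
      rw [← htrMR, ← htrace0, Complex.ofReal_re]
    rw [h1, htr_split, Complex.add_re]
  have hreME : ((M * E).trace).re ≤ N * Real.sqrt (u - s / N) := by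
    calc ((M * E).trace).re ≤ ‖(M * E).trace‖ := Complex.re_le_norm _
      _ ≤ Real.sqrt ((N:ℝ) * nsE) := habsME
      _ = N * Real.sqrt (u - s / N) := hsqrt_eq
  rw [hfinal]
  linarith

end Stmt9Aux

open Matrix




open Matrix

/-- Entanglement-fidelity upper bound from the spectrum. Let `T` be the traceless
block of the Pauli transfer matrix of a channel, with eigenvalues `lam j`, and `TU`
an orthogonal matrix (the target gate) with eigenvalues `lamIdeal j`. With the
unitarity `u = Tr[Tᵀ T]/N` and `ξ_max = max_π (1/N)|Σ_i conj (lam (π i)) · lamIdeal i|`,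
the entanglement fidelity `(1/(N+1))(1 + Tr[TUᵀ T])` is at most
`(1/(N+1))(1 + N √(u − Σ_j |λ_j|²/N) + N ξ_max)`. -/
theorem stmt_9 (N : ℕ) (hN : 0 < N) (T TU : Matrix (Fin N) (Fin N) ℝ)
    (hTU : TUᵀ * TU = 1)
    (lam lamIdeal : Fin N → ℂ)
    (hlam : (T.map Complex.ofReal).charpoly.roots = Multiset.map lam Finset.univ.val)
    (hlamIdeal : (TU.map Complex.ofReal).charpoly.roots =
      Multiset.map lamIdeal Finset.univ.val)
    (u ximax : ℝ)
    (hu : u = (Tᵀ * T).trace / N)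
    (hxi : ximax = Finset.univ.sup' Finset.univ_nonempty
      (fun π : Equiv.Perm (Fin N) =>
        (1 / N) * ‖∑ i, (starRingEnd ℂ) (lam (π i)) * lamIdeal i‖)) :
    (1 / (N + 1) : ℝ) * (1 + (TUᵀ * T).trace) ≤
      (1 / (N + 1)) *
        (1 + N * Real.sqrt (u - (∑ j, ‖lam j‖ ^ 2) / N) + N * ximax) := by

  have key := Stmt9Aux.key_bound N hN T TU hTU lam lamIdeal hlam hlamIdeal u ximax hu hxi
  have h1 : (0:ℝ) ≤ 1 / ((N:ℝ) + 1) := by positivity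
  have h2 : 1 + (TUᵀ * T).trace
      ≤ 1 + N * Real.sqrt (u - (∑ j, ‖lam j‖ ^ 2) / N) + N * ximax := by
    linarith
  calc (1 / ((N:ℝ) + 1)) * (1 + (TUᵀ * T).trace)
      ≤ (1 / ((N:ℝ) + 1)) *
        (1 + N * Real.sqrt (u - (∑ j, ‖lam j‖ ^ 2) / N) + N * ximax) :=
        mul_le_mul_of_nonneg_left h2 h1
end

section
/- Weyl's weak majorization inequality: for any N×N complex matrix T, the sum of the F largest singular values is at least the sum of the F largest eigenvalue magnitudes, for every F ∈ {1,...,N}. -/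
/-
Schur triangularisation gives an orthonormal family `e` with `⟪e j, T (e j)⟫ = λ j`, and a singular
value decomposition `T (v i) = σ i • w i` gives, by AM–GM,
`‖⟪e j, T (e j)⟫‖ ≤ ∑ i, σ i * (‖⟪e j, v i⟫‖² + ‖⟪e j, w i⟫‖²) / 2`.
Summing over `F` indices `j`, the weights of the `σ i` lie in `[0, 1]` by Bessel's inequality and
add up to `F` by Parseval's identity; since `σ` is decreasing, such a weighted sum of the `σ i` is at
most `σ 1 + ⋯ + σ F`.
-/

open Finset Module Polynomial

theorem Fin.sum_filter_val_lt_eq_sum_range {M : Type*} [AddCommMonoid M] {N F : ℕ} (hF : F ≤ N)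
    (g : ℕ → M) : ∑ i ∈ univ.filter (fun i : Fin N => (i : ℕ) < F), g i = ∑ m ∈ range F, g m := by
  rw [sum_filter, Fin.sum_univ_eq_sum_range (fun m => if m < F then g m else 0), ← sum_filter]
  congr 1
  ext m
  simp only [mem_filter, mem_range]
  omega

theorem sum_mul_le_sum_range_of_antitone {n : ℕ} {σ : ℕ → ℝ} (hσ : Antitone σ)
    (hσ0 : ∀ m, 0 ≤ σ m) {c : Fin n → ℝ} (hc0 : ∀ i, 0 ≤ c i) (hc1 : ∀ i, c i ≤ 1) {k : ℕ}
    (hck : ∑ i, c i ≤ k) :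
    ∑ i : Fin n, σ i * c i ≤ ∑ m ∈ range k, σ m := by
  -- `t` separates the `k` largest values of `σ` from the others (also for `k = 0`).
  set t := σ (k - 1)
  have hpoint (i : Fin n) : σ i * c i ≤ t * c i + if (i : ℕ) < k then σ i - t else 0 := by
    split_ifs with hik
    · have : t ≤ σ i := hσ (by omega)
      nlinarith [hc1 i]
    · have : σ i ≤ t := hσ (by omega)
      nlinarith [hc0 i]
  have hhead : ∑ i : Fin n, (if (i : ℕ) < k then σ i - t else 0) ≤ ∑ m ∈ range k, (σ m - t) := by
    rw [Fin.sum_univ_eq_sum_range (fun m => if m < k then σ m - t else 0), ← sum_filter]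
    refine sum_le_sum_of_subset_of_nonneg (fun m hm => ?_) fun m hm _ => ?_
    · simpa using (mem_filter.1 hm).2
    · exact sub_nonneg.2 (hσ (by simp at hm; omega))
  calc ∑ i : Fin n, σ i * c i
      ≤ ∑ i : Fin n, (t * c i + if (i : ℕ) < k then σ i - t else 0) := sum_le_sum fun i _ => hpoint i
    _ ≤ t * k + ∑ m ∈ range k, (σ m - t) := by
        rw [sum_add_distrib, ← mul_sum]
        exact add_le_add (mul_le_mul_of_nonneg_left hck (hσ0 _)) hhead
    _ = ∑ m ∈ range k, σ m := by simp [sum_sub_distrib]; ring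

theorem Matrix.charpoly_eq_X_sub_C_mul_charpoly_submatrix_succ {R : Type*} [CommRing R] {n : ℕ}
    (M : Matrix (Fin (n + 1)) (Fin (n + 1)) R) (hM : ∀ i, i ≠ 0 → M i 0 = 0) :
    M.charpoly = (X - C (M 0 0)) * (M.submatrix Fin.succ Fin.succ).charpoly := by
  have hsub : (charmatrix M).submatrix Fin.succ Fin.succ =
      charmatrix (M.submatrix Fin.succ Fin.succ) := by
    ext i j
    by_cases hij : i = j
    · subst hij; simp [charmatrix_apply_eq]
    · rw [submatrix_apply, charmatrix_apply_ne _ _ _ (Fin.succ_injective _ |>.ne hij),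
        charmatrix_apply_ne _ _ _ hij, submatrix_apply]
  rw [charpoly, charpoly, det_succ_column_zero, sum_eq_single 0]
  · simp [charmatrix_apply_eq, hsub]
  · intro i _ hi
    simp [charmatrix_apply_ne _ _ _ hi, hM i hi]
  · simp

section InnerProductSpace

variable {𝕜 : Type*} [RCLike 𝕜] {E F : Type*} [NormedAddCommGroup E] [InnerProductSpace 𝕜 E]
  [NormedAddCommGroup F] [InnerProductSpace 𝕜 F]

theorem Orthonormal.fin_cons {m : ℕ} {c : Fin m → E} (hc : Orthonormal 𝕜 c) {u : E}
    (hu : ‖u‖ = 1) (huc : ∀ i, inner 𝕜 u (c i) = 0) :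
    Orthonormal 𝕜 (Fin.cons u c : Fin (m + 1) → E) := by
  rw [orthonormal_iff_ite] at hc ⊢
  intro i j
  cases i using Fin.cases <;> cases j using Fin.cases
  · simp [inner_self_eq_norm_sq_to_K, hu]
  · simp [huc, (Fin.succ_ne_zero _).symm]
  · simp [inner_eq_zero_symm.1 (huc _), Fin.succ_ne_zero]
  · simp [hc]

theorem norm_inner_map_self_le {ι : Type*} [Fintype ι] {f : E →ₗ[𝕜] E} {σ : ι → ℝ}
    (hσ : ∀ i, 0 ≤ σ i) (v : OrthonormalBasis ι 𝕜 E) (w : ι → E)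
    (hvw : ∀ i, f (v i) = (σ i : 𝕜) • w i) (x : E) :
    ‖inner 𝕜 x (f x)‖ ≤ ∑ i, σ i * ((‖inner 𝕜 x (v i)‖ ^ 2 + ‖inner 𝕜 x (w i)‖ ^ 2) / 2) := by
  have hexp : inner 𝕜 x (f x) = ∑ i, inner 𝕜 (v i) x * (σ i : 𝕜) * inner 𝕜 x (w i) := by
    have hfx : f x = ∑ i, inner 𝕜 (v i) x • (σ i : 𝕜) • w i := by
      conv_lhs => rw [← v.sum_repr' x]
      simp [hvw]
    simp [hfx, inner_sum, inner_smul_right, mul_assoc]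
  rw [hexp]
  refine (norm_sum_le _ _).trans (sum_le_sum fun i _ => ?_)
  rw [norm_mul, norm_mul, norm_inner_symm, RCLike.norm_ofReal, abs_of_nonneg (hσ i)]
  nlinarith [sq_nonneg (‖inner 𝕜 x (v i)‖ - ‖inner 𝕜 x (w i)‖), hσ i]

variable [FiniteDimensional 𝕜 E]

theorem LinearMap.charpoly_eq_X_sub_C_mul_charpoly_compression
    (f : E →ₗ[𝕜] E) {u : E} (hu : ‖u‖ = 1) {μ : 𝕜} (hfu : f u = μ • u) :
    f.charpoly = (X - C μ) *
      ((𝕜 ∙ u)ᗮ.orthogonalProjectionOnto.toLinearMap ∘ₗ f ∘ₗ (𝕜 ∙ u)ᗮ.subtype).charpoly := by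
  set W := (𝕜 ∙ u)ᗮ
  let b := stdOrthonormalBasis 𝕜 W
  let B : Fin (finrank 𝕜 W + 1) → E := Fin.cons u fun i => (b i : E)
  have hB : Orthonormal 𝕜 B := (b.orthonormal.comp_linearIsometry W.subtypeₗᵢ).fin_cons hu
    fun i => Submodule.mem_orthogonal_singleton_iff_inner_right.1 (b i).2
  have hcard : Fintype.card (Fin (finrank 𝕜 W + 1)) = finrank 𝕜 E := by
    have := (𝕜 ∙ u).finrank_add_finrank_orthogonal
    rw [finrank_span_singleton (norm_ne_zero_iff.1 (by simp [hu]))] at this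
    simp [W]; omega
  let Bo := OrthonormalBasis.mk hB (hB.linearIndependent.span_eq_top_of_card_eq_finrank' hcard).ge
  let M := toMatrix Bo.toBasis Bo.toBasis f
  have hM (i j) : M i j = inner 𝕜 (B i) (f (B j)) := by
    simp [M, Bo, toMatrix_apply, OrthonormalBasis.repr_apply_apply]
  have hcol (i) (hi : i ≠ 0) : M i 0 = 0 := by
    rw [hM, show f (B 0) = μ • B 0 from hfu, inner_smul_right, orthonormal_iff_ite.1 hB i 0,
      if_neg hi, mul_zero]
  have hcorner : M 0 0 = μ := by
    rw [hM, show B 0 = u from rfl, hfu, inner_smul_right, inner_self_eq_norm_sq_to_K, hu]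
    simp
  have hsub : M.submatrix Fin.succ Fin.succ = toMatrix b.toBasis b.toBasis
      (W.orthogonalProjectionOnto.toLinearMap ∘ₗ f ∘ₗ W.subtype) := by
    ext i j
    simp [hM, toMatrix_apply, B, b.repr_apply_apply]
  rw [← charpoly_toMatrix f Bo.toBasis, M.charpoly_eq_X_sub_C_mul_charpoly_submatrix_succ hcol,
    hcorner, hsub, charpoly_toMatrix]

/-- Schur triangularisation, read off on the diagonal. -/
theorem LinearMap.exists_orthonormal_inner_map_self_eq {n : ℕ} (f : E →ₗ[𝕜] E) {l : Fin n → 𝕜}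
    (hl : f.charpoly.roots = Multiset.map l univ.val) :
    ∃ e : Fin n → E, Orthonormal 𝕜 e ∧ ∀ j, inner 𝕜 (e j) (f (e j)) = l j := by
  induction n generalizing E with
  | zero => exact ⟨finZeroElim, ⟨finZeroElim, finZeroElim⟩, finZeroElim⟩
  | succ n ih =>
    have hroot : f.charpoly.IsRoot (l 0) :=
      isRoot_of_mem_roots (hl ▸ Multiset.mem_map_of_mem l (mem_univ_val 0))
    obtain ⟨x, hx⟩ :=
      ((Module.End.hasEigenvalue_iff_isRoot_charpoly f _).2 hroot).exists_hasEigenvector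
    let u : E := ((‖x‖ : 𝕜))⁻¹ • x
    have hu : ‖u‖ = 1 := norm_smul_inv_norm hx.2
    have hfu : f u = l 0 • u := by
      rw [map_smul, hx.apply_eq_smul, smul_comm]
    set W := (𝕜 ∙ u)ᗮ
    let g := W.orthogonalProjectionOnto.toLinearMap ∘ₗ f ∘ₗ W.subtype
    have hg : g.charpoly.roots = Multiset.map (fun j : Fin n => l j.succ) univ.val := by
      have hcons := hl
      rw [f.charpoly_eq_X_sub_C_mul_charpoly_compression hu hfu,
        roots_mul (mul_ne_zero (X_sub_C_ne_zero _) g.charpoly_monic.ne_zero), roots_X_sub_C,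
        Fin.univ_val_map, List.ofFn_succ, Multiset.singleton_add] at hcons
      rw [Fin.univ_val_map]
      exact (Multiset.cons_inj_right (l 0)).1 (by simpa using hcons)
    obtain ⟨e, he, hel⟩ := ih g hg
    refine ⟨Fin.cons u fun j => (e j : E),
      (he.comp_linearIsometry W.subtypeₗᵢ).fin_cons hu
        fun j => Submodule.mem_orthogonal_singleton_iff_inner_right.1 (e j).2, fun j => ?_⟩
    cases j using Fin.cases
    · simp [hfu, inner_smul_right, inner_self_eq_norm_sq_to_K, hu]
    · simpa [g] using hel _

theorem LinearMap.IsSymmetric.eigenvalues_eq_of_roots_charpoly {T : E →ₗ[𝕜] E}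
    (hT : T.IsSymmetric) {n : ℕ} (hn : finrank 𝕜 E = n) {d : Fin n → ℝ} (hd : Antitone d)
    (hroots : T.charpoly.roots = Multiset.map (fun i => (d i : 𝕜)) univ.val) :
    hT.eigenvalues hn = d := by
  rw [← List.ofFn_inj, ← hT.sort_roots_charpoly_eq_eigenvalues hn, hroots]
  simp_rw [Fin.univ_val_map, Multiset.map_coe, List.map_ofFn, Function.comp_def,
    RCLike.ofReal_re, Multiset.coe_sort]
  apply List.mergeSort_of_pairwise
  simp_rw [decide_eq_true_eq, ← List.sortedGE_iff_pairwise]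
  exact hd.sortedGE_ofFn

variable [FiniteDimensional 𝕜 F]

theorem LinearMap.singularValues_fin_eq_of_roots_charpoly (f : E →ₗ[𝕜] F) {n : ℕ}
    (hn : finrank 𝕜 E = n) {σ : Fin n → ℝ} (hσ0 : ∀ i, 0 ≤ σ i) (hσ : Antitone σ)
    (hroots : (adjoint f ∘ₗ f).charpoly.roots =
      Multiset.map (fun i => (σ i : 𝕜) ^ 2) univ.val) (i : Fin n) :
    f.singularValues i = σ i := by
  have hsq : Antitone fun i => σ i ^ 2 := fun i j hij =>
    pow_le_pow_left₀ (hσ0 j) (hσ hij) 2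
  rw [f.singularValues_fin hn,
    f.isSymmetric_adjoint_comp_self.eigenvalues_eq_of_roots_charpoly hn hsq (by simpa using hroots),
    Real.sqrt_sq (hσ0 i)]

theorem LinearMap.exists_orthonormalBasis_apply_eq_singularValues_smul (f : E →ₗ[𝕜] F) {n : ℕ}
    (hE : finrank 𝕜 E = n) (hF : finrank 𝕜 F = n) :
    ∃ (v : OrthonormalBasis (Fin n) 𝕜 E) (w : OrthonormalBasis (Fin n) 𝕜 F),
      ∀ i, f (v i) = (f.singularValues i : 𝕜) • w i := by
  let v := f.isSymmetric_adjoint_comp_self.eigenvectorBasis hE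
  let σ : Fin n → 𝕜 := fun i => (f.singularValues i : 𝕜)
  have hinner (i j : Fin n) :
      inner 𝕜 (f (v i)) (f (v j)) = σ j ^ 2 * if i = j then 1 else 0 := by
    rw [← adjoint_inner_right, ← comp_apply, IsSymmetric.apply_eigenvectorBasis, inner_smul_right,
      ← f.sq_singularValues_fin hE, orthonormal_iff_ite.1 v.orthonormal]
    push_cast; rfl
  let u : Fin n → F := fun i => (σ i)⁻¹ • f (v i)
  let s : Set (Fin n) := {i | σ i ≠ 0}
  have hu : Orthonormal 𝕜 (s.domRestrict u) := by
    rw [orthonormal_iff_ite]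
    rintro ⟨i, hi⟩ ⟨j, hj⟩
    simp only [Set.domRestrict_apply, u, inner_smul_left, inner_smul_right, hinner,
      Subtype.mk.injEq]
    split_ifs with hij
    · subst hij
      have hi : σ i ≠ 0 := hi
      simp only [σ, RCLike.conj_inv, RCLike.conj_ofReal] at hi ⊢
      field_simp
    · simp
  obtain ⟨w, hw⟩ := hu.exists_orthonormalBasis_extension_of_card_eq (by simp [hF])
  refine ⟨v, w, fun i => ?_⟩
  by_cases hi : σ i = 0
  · have hfv : inner 𝕜 (f (v i)) (f (v i)) = 0 := by rw [hinner, hi]; simp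
    rw [inner_self_eq_zero.1 hfv, show (f.singularValues i : 𝕜) = 0 from hi, zero_smul]
  · rw [hw i hi]
    exact (smul_inv_smul₀ hi _).symm

theorem LinearMap.sum_norm_inner_map_self_le_sum_singularValues (f : E →ₗ[𝕜] E) {κ : Type*}
    {e : κ → E} (he : Orthonormal 𝕜 e) (J : Finset κ) :
    ∑ j ∈ J, ‖inner 𝕜 (e j) (f (e j))‖ ≤ ∑ i ∈ Finset.range #J, f.singularValues i := by
  obtain ⟨v, w, hvw⟩ := f.exists_orthonormalBasis_apply_eq_singularValues_smul rfl rfl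
  let c : Fin (finrank 𝕜 E) → ℝ := fun i =>
    ∑ j ∈ J, (‖inner 𝕜 (e j) (v i)‖ ^ 2 + ‖inner 𝕜 (e j) (w i)‖ ^ 2) / 2
  have hc0 (i) : 0 ≤ c i := sum_nonneg fun j _ => by positivity
  have hc1 (i) : c i ≤ 1 := by
    have hv := he.sum_inner_products_le (s := J) (v i)
    have hw := he.sum_inner_products_le (s := J) (w i)
    rw [v.orthonormal.1 i] at hv
    rw [w.orthonormal.1 i] at hw
    simp only [c, ← sum_div, sum_add_distrib]
    linarith
  have hcsum : ∑ i, c i = #J := by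
    rw [sum_comm]
    simp [← sum_div, sum_add_distrib, OrthonormalBasis.sum_sq_norm_inner_left, he.1]
  calc ∑ j ∈ J, ‖inner 𝕜 (e j) (f (e j))‖
      ≤ ∑ j ∈ J, ∑ i : Fin (finrank 𝕜 E), f.singularValues i *
          ((‖inner 𝕜 (e j) (v i)‖ ^ 2 + ‖inner 𝕜 (e j) (w i)‖ ^ 2) / 2) :=
        sum_le_sum fun j _ => norm_inner_map_self_le
          (fun i : Fin (finrank 𝕜 E) => f.singularValues_nonneg i) v w hvw (e j)
    _ = ∑ i : Fin (finrank 𝕜 E), f.singularValues i * c i := by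
        rw [sum_comm]; simp only [c, mul_sum]
    _ ≤ ∑ i ∈ Finset.range #J, f.singularValues i :=
        sum_mul_le_sum_range_of_antitone f.singularValues_antitone f.singularValues_nonneg hc0 hc1
          hcsum.le

theorem LinearMap.sum_norm_le_sum_singularValues (f : E →ₗ[𝕜] E) {n : ℕ} {l : Fin n → 𝕜}
    (hl : f.charpoly.roots = Multiset.map l univ.val) (J : Finset (Fin n)) :
    ∑ j ∈ J, ‖l j‖ ≤ ∑ i ∈ Finset.range #J, f.singularValues i := by
  obtain ⟨e, he, hel⟩ := f.exists_orthonormal_inner_map_self_eq hl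
  simpa only [hel] using f.sum_norm_inner_map_self_le_sum_singularValues he J

end InnerProductSpace

open Matrix

theorem stmt_11_general (N : ℕ) (T : Matrix (Fin N) (Fin N) ℂ)
    (σ : Fin N → ℝ) (hσ0 : ∀ i, 0 ≤ σ i)
    (hσ : (Tᴴ * T).charpoly.roots =
      Multiset.map (fun i => ((σ i : ℂ)) ^ 2) Finset.univ.val)
    (hσmono : ∀ i j : Fin N, i ≤ j → σ j ≤ σ i)
    (lam : Fin N → ℂ)
    (hlam : T.charpoly.roots = Multiset.map lam Finset.univ.val) :
    ∀ F : ℕ, 1 ≤ F → F ≤ N →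
      ∑ i ∈ Finset.univ.filter (fun i : Fin N => (i : ℕ) < F), ‖lam i‖ ≤
        ∑ i ∈ Finset.univ.filter (fun i : Fin N => (i : ℕ) < F), σ i := by
  intro F _ hFN
  have hcharpoly (A : Matrix (Fin N) (Fin N) ℂ) : (toEuclideanLin A).charpoly = A.charpoly := by
    rw [toEuclideanLin, toLpLin_eq_toLin, charpoly_toLin]
  set f := toEuclideanLin T
  have hsv (i : Fin N) : f.singularValues i = σ i := by
    refine f.singularValues_fin_eq_of_roots_charpoly finrank_euclideanSpace_fin hσ0 hσmono ?_ i
    rw [← toEuclideanLin_conjTranspose_eq_adjoint, ← toLpLin_mul_same, hcharpoly]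
    exact hσ
  have hcard : #(univ.filter fun i : Fin N => (i : ℕ) < F) = F := by
    rw [card_eq_sum_ones, Fin.sum_filter_val_lt_eq_sum_range hFN (fun _ => 1), sum_const,
      card_range, smul_eq_mul, mul_one]
  calc ∑ i ∈ univ.filter (fun i : Fin N => (i : ℕ) < F), ‖lam i‖
      ≤ ∑ m ∈ range #(univ.filter fun i : Fin N => (i : ℕ) < F), f.singularValues m :=
        f.sum_norm_le_sum_singularValues (hcharpoly T ▸ hlam) _
    _ = ∑ i ∈ univ.filter (fun i : Fin N => (i : ℕ) < F), σ i := by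
        rw [hcard, ← Fin.sum_filter_val_lt_eq_sum_range hFN]
        exact sum_congr rfl fun i _ => hsv i

/-- Weyl's weak majorization inequality: for an `N × N` complex matrix `T` with
singular values `σ 1 ≥ … ≥ σ N` and eigenvalues ordered with `|λ 1| ≥ … ≥ |λ N|`,
the sum of the `F` largest singular values is at least the sum of the `F` largest
eigenvalue magnitudes, for every `F ∈ {1, …, N}`. -/
theorem stmt_11 (N : ℕ) (T : Matrix (Fin N) (Fin N) ℂ)
    (σ : Fin N → ℝ) (hσ0 : ∀ i, 0 ≤ σ i)
    (hσ : (Tᴴ * T).charpoly.roots =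
      Multiset.map (fun i => ((σ i : ℂ)) ^ 2) Finset.univ.val)
    (hσmono : ∀ i j : Fin N, i ≤ j → σ j ≤ σ i)
    (lam : Fin N → ℂ)
    (hlam : T.charpoly.roots = Multiset.map lam Finset.univ.val)
    (hlammono : ∀ i j : Fin N, i ≤ j → ‖lam j‖ ≤ ‖lam i‖) :
    ∀ F : ℕ, 1 ≤ F → F ≤ N →
      ∑ i ∈ Finset.univ.filter (fun i : Fin N => (i : ℕ) < F), ‖lam i‖ ≤
        ∑ i ∈ Finset.univ.filter (fun i : Fin N => (i : ℕ) < F), σ i :=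
  stmt_11_general N T σ hσ0 hσ hσmono lam hlam
end

section
/- Let g(k) = Σ_{j=1}^N A_j λ_j^k with distinct nonzero λ_j ∈ ℂ and A_j ∈ ℂ, and let G_0, G_1 be the M×M Hankel matrices G_0 = (g(i+j))_{0≤i,j≤M−1}, G_1 = (g(i+j+1))_{0≤i,j≤M−1} with M ≥ N. If G_0 is invertible, then every λ_j is an eigenvalue of the matrix 𝔗 = G_1 G_0^{−1}. -/
/-!
Let `p` be the Lagrange basis polynomial that is `1` at `λ_j` and `0` at the other nodes, and `w`
its coefficient vector (it fits in `ℂ^M` because `deg p = N - 1 < M`). Pairing a row of the Hankel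
matrix with `w` evaluates `p` at every node, so `G₀ w = A_j (λ_j^i)_i` and `G₁ w = λ_j G₀ w`.
Since `G₀` is invertible and `w ≠ 0`, `G₀ w` is a nonzero eigenvector of `G₁ G₀⁻¹` for `λ_j`.
-/

open Matrix Polynomial Finset

theorem Matrix.mulVec_mul_inv_of_mulVec_eq_smul {n R : Type*} [Fintype n] [DecidableEq n]
    [CommRing R] {G₀ G₁ : Matrix n n R} (hG₀ : IsUnit G₀.det) {w : n → R} {μ : R}
    (hw : G₁ *ᵥ w = μ • G₀ *ᵥ w) : (G₁ * G₀⁻¹) *ᵥ (G₀ *ᵥ w) = μ • G₀ *ᵥ w := by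
  rw [mulVec_mulVec, nonsing_inv_mul_cancel_right G₀ G₁ hG₀, hw]

theorem Polynomial.coeff_fin_ne_zero {R : Type*} [Semiring R] {p : R[X]} (hp : p ≠ 0) {M : ℕ}
    (hpM : p.natDegree < M) : (fun m : Fin M => p.coeff m) ≠ 0 := fun h =>
  hp <| leadingCoeff_eq_zero.mp <| congrFun h ⟨p.natDegree, hpM⟩

theorem sum_mul_coeff_eq_sum_mul_eval {R ι : Type*} [CommSemiring R] [Fintype ι] (A lam : ι → R)
    {p : R[X]} {M : ℕ} (hpM : p.natDegree < M) (t : ℕ) :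
    ∑ m : Fin M, (∑ k, A k * lam k ^ (t + m)) * p.coeff m =
      ∑ k, A k * lam k ^ t * p.eval (lam k) := by
  simp only [eval_eq_sum_range' hpM, ← Fin.sum_univ_eq_sum_range, Finset.mul_sum, Finset.sum_mul]
  rw [Finset.sum_comm]
  refine Finset.sum_congr rfl fun k _ => Finset.sum_congr rfl fun m _ => ?_
  ring

theorem Lagrange.sum_mul_eval_basis {F ι : Type*} [Field F] [Fintype ι] [DecidableEq ι]
    {v : ι → F} (hv : Function.Injective v) (f : ι → F) (j : ι) :
    ∑ k, f k * (Lagrange.basis univ v j).eval (v k) = f j := by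
  rw [Finset.sum_eq_single j (fun k _ hkj => by rw [eval_basis_of_ne hkj.symm (mem_univ k),
    mul_zero]) (fun hj => absurd (mem_univ j) hj), eval_basis_self hv.injOn (mem_univ j), mul_one]

theorem stmt_17_general (N M : ℕ) (hMN : N ≤ M)
    (lam : Fin N → ℂ) (hdist : Function.Injective lam)
    (A : Fin N → ℂ) (g : ℕ → ℂ) (hg : ∀ k, g k = ∑ j, A j * lam j ^ k)
    (G0 G1 : Matrix (Fin M) (Fin M) ℂ)
    (hG0 : ∀ i j : Fin M, G0 i j = g ((i : ℕ) + (j : ℕ)))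
    (hG1 : ∀ i j : Fin M, G1 i j = g ((i : ℕ) + (j : ℕ) + 1))
    (hinv : IsUnit G0.det) :
    ∀ j : Fin N, ∃ v : Fin M → ℂ, v ≠ 0 ∧ (G1 * G0⁻¹).mulVec v = lam j • v := by
  intro j
  set p := Lagrange.basis univ lam j
  have hpM : p.natDegree < M := by
    rw [Lagrange.natDegree_basis hdist.injOn (mem_univ j), card_univ, Fintype.card_fin]
    have := j.pos
    omega
  set w : Fin M → ℂ := fun m => p.coeff m
  have hHankel (t : ℕ) : ∑ m : Fin M, g (t + m) * w m = A j * lam j ^ t := by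
    simp only [hg, w, sum_mul_coeff_eq_sum_mul_eval A lam hpM, p, Lagrange.sum_mul_eval_basis hdist]
  have hG0w (i : Fin M) : (G0 *ᵥ w) i = A j * lam j ^ (i : ℕ) := by
    simp only [mulVec, dotProduct, hG0, hHankel]
  have hG1w : G1 *ᵥ w = lam j • G0 *ᵥ w := funext fun i => by
    rw [Pi.smul_apply, hG0w, smul_eq_mul]
    simp only [mulVec, dotProduct, hG1, add_right_comm _ _ 1, hHankel, pow_succ]
    ring
  have hw : w ≠ 0 := coeff_fin_ne_zero (Lagrange.basis_ne_zero hdist.injOn (mem_univ j)) hpM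
  have hG0w_ne : G0 *ᵥ w ≠ 0 := fun h => hw <|
    mulVec_injective_of_isUnit ((isUnit_iff_isUnit_det G0).mpr hinv) (h.trans (mulVec_zero G0).symm)
  exact ⟨G0 *ᵥ w, hG0w_ne, mulVec_mul_inv_of_mulVec_eq_smul hinv hG1w⟩

/-- Matrix-pencil / ESPRIT eigenvalue recovery: let `g k = Σ_j A_j λ_j^k` with
distinct nonzero `λ_j`, and let `G0, G1` be the `M × M` Hankel matrices
`G0 i j = g (i + j)`, `G1 i j = g (i + j + 1)` with `M ≥ N`. If `G0` is invertible,
then every `λ_j` is an eigenvalue of `𝔗 = G1 * G0⁻¹`. -/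
theorem stmt_17 (N M : ℕ) (hMN : N ≤ M)
    (lam : Fin N → ℂ) (hdist : Function.Injective lam) (hne : ∀ j, lam j ≠ 0)
    (A : Fin N → ℂ) (g : ℕ → ℂ) (hg : ∀ k, g k = ∑ j, A j * lam j ^ k)
    (G0 G1 : Matrix (Fin M) (Fin M) ℂ)
    (hG0 : ∀ i j : Fin M, G0 i j = g ((i : ℕ) + (j : ℕ)))
    (hG1 : ∀ i j : Fin M, G1 i j = g ((i : ℕ) + (j : ℕ) + 1))
    (hinv : IsUnit G0.det) :
    ∀ j : Fin N, ∃ v : Fin M → ℂ, v ≠ 0 ∧ (G1 * G0⁻¹).mulVec v = lam j • v :=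
  stmt_17_general N M hMN lam hdist A g hg G0 G1 hG0 hG1 hinv
end
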